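/- For every integer d ≥ 4, we have (1 + 1/(3d))^d - (1 + 1/(3d) - (1/d + 1/(3d^2)))^d < 1. -/

import Mathlib

/-- `(1 - 1/d)^d` is at least `81/256 = (3/4)^4` for `d ≥ 4`. -/
lemma aux_lower (d : ℕ) (hd : 4 ≤ d) : (81/256 : ℝ) ≤ (1 - 1/(d:ℝ))^d := by
  induction d, hd using Nat.le_induction with
  | base => norm_num
  | succ d hd ih =>
      refine le_trans ih ?_
      have hn : (4:ℝ) ≤ (d:ℝ) := by exact_mod_cast hd
      set n : ℝ := (d:ℝ) with hn'
      have h0 : (0:ℝ) < n := by linarith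
      have h1 : (0:ℝ) < n + 1 := by linarith
      have hsq : (0:ℝ) < n^2 - 1 := by nlinarith
      have hP : (0:ℝ) < (n^2 - 1)^d := pow_pos hsq d
      -- Bernoulli
      have hber : 1 + (d:ℝ) * (1/(n^2-1)) ≤ (1 + 1/(n^2-1))^d :=
        one_add_mul_le_pow (by have h := div_pos one_pos hsq; linarith) d
      have hkey : (n+1) * (n^2-1)^d ≤ n^(2*d+1) := by
        have h2 : (1 + 1/n : ℝ) ≤ (1 + 1/(n^2-1))^d := by
          refine le_trans ?_ hber
          rw [← hn']
          have : 1/n ≤ n * (1/(n^2-1)) := by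
            rw [mul_one_div, div_le_div_iff₀ h0 hsq]
            nlinarith
          linarith
        have h3 : (1 + 1/(n^2-1))^d = n^(2*d) / (n^2-1)^d := by
          have hb : (1 + 1/(n^2-1)) = n^2/(n^2-1) := by field_simp; ring
          rw [hb, div_pow, ← pow_mul]
        rw [h3] at h2
        have h4 : (1 + 1/n : ℝ) = (n+1)/n := by field_simp
        rw [h4, div_le_div_iff₀ h0 hP] at h2
        calc (n+1) * (n^2-1)^d ≤ n^(2*d) * n := h2
          _ = n^(2*d+1) := by rw [pow_succ]
      -- now compare the two powers
      have goal : ((n-1)/n)^d ≤ (n/(n+1))^(d+1) := by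
        rw [div_pow, div_pow, div_le_div_iff₀ (by positivity) (by positivity)]
        have hmm : (n-1)^d * (n+1)^(d+1) = (n+1) * (n^2-1)^d := by
          rw [pow_succ, ← mul_assoc, ← mul_pow]
          ring_nf
        rw [hmm]
        calc (n+1) * (n^2-1)^d ≤ n^(2*d+1) := hkey
          _ = n^(d+1) * n^d := by rw [← pow_add]; ring_nf
      have e1 : (1 - 1/n) = (n-1)/n := by field_simp
      have e2 : (1 - 1/((d:ℝ)+1)) = n/(n+1) := by rw [← hn']; field_simp; ring
      rw [e1]
      have : ((d+1:ℕ):ℝ) = n + 1 := by push_cast; rw [← hn']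
      rw [this, e2]
      exact goal

/-- Key numerical inequality in the proof of Lemma 3 of Nakamaye's
"Seshadri constants at very general points". -/
theorem stmt_0 (d : ℕ) (hd : 4 ≤ d) :
    (1 + 1 / (3 * (d : ℝ))) ^ d
      - (1 + 1 / (3 * (d : ℝ)) - (1 / (d : ℝ) + 1 / (3 * (d : ℝ) ^ 2))) ^ d < 1 := by
  have hn : (4:ℝ) ≤ (d:ℝ) := by exact_mod_cast hd
  set n : ℝ := (d:ℝ) with hn'
  have h0 : (0:ℝ) < n := by linarith
  -- factor the second base
  have hfac : (1 + 1/(3*n) - (1/n + 1/(3*n^2))) = (1 + 1/(3*n)) * (1 - 1/n) := by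
    field_simp
  rw [hfac, mul_pow]
  set A : ℝ := (1 + 1/(3*n))^d with hA
  set B : ℝ := (1 - 1/n)^d with hB
  have hApos : 0 < A := by positivity
  have hBlb : (81/256 : ℝ) ≤ B := aux_lower d hd
  have hBub : B ≤ 1 := by
    apply pow_le_one₀
    · have : 1/n ≤ 1 := by rw [div_le_one h0]; linarith
      linarith
    · have : 0 < 1/n := by positivity
      linarith
  -- A ≤ exp(1/3)
  have hAexp : A ≤ Real.exp (1/3) := by
    have h1 : (1 + 1/(3*n)) ≤ Real.exp (1/(3*n)) := by
      have := Real.add_one_le_exp (1/(3*n)); linarith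
    calc A ≤ (Real.exp (1/(3*n)))^d := by
            apply pow_le_pow_left₀ (by positivity) h1
      _ = Real.exp (d * (1/(3*n))) := by rw [← Real.exp_nat_mul]
      _ = Real.exp (1/3) := by
            congr 1
            rw [← hn']
            field_simp
  have hexp : Real.exp (1/3) < 1.396 := by
    have h3 : (Real.exp (1/3))^3 = Real.exp 1 := by
      rw [← Real.exp_nat_mul]; norm_num
    have he : Real.exp 1 < 2.7182818286 := Real.exp_one_lt_d9
    have : (Real.exp (1/3))^3 < (1.396:ℝ)^3 := by
      rw [h3]; nlinarith
    exact lt_of_pow_lt_pow_left₀ 3 (by norm_num) this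
  nlinarith [hAexp, hexp, hBlb, hBub, hApos]
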